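/- For any policy π and transition kernels P_s, P_t on a finite MDP with rewards bounded by R_max: J^π_{P_t} ≥ J^π_{P_s} − (2 R_max/(1−γ)) · ( D_TV(d^π_{P_s}, d^π_{P_t}) + E_{s∼d^π_{P_s}, a∼π(·|s)}[ D_TV(P_s(·|s,a), P_t(·|s,a)) ] ). -/

import Mathlib

open scoped BigOperators

section MDP

variable {S A : Type*} [Fintype S] [Fintype A] [DecidableEq S]

/-- One-step state distribution update under kernel `P` and policy `π`. -/
noncomputable def stepDist (P : S → A → S → ℝ) (π : S → A → ℝ) (ρ : S → ℝ) : S → ℝ :=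
  fun s => ∑ s' : S, ∑ a : A, ρ s' * π s' a * P s' a s

/-- Distribution of the state at time `t`. -/
noncomputable def stateDist (P : S → A → S → ℝ) (π : S → A → ℝ) (ρ₀ : S → ℝ) : ℕ → S → ℝ
  | 0 => ρ₀
  | t + 1 => stepDist P π (stateDist P π ρ₀ t)

/-- Discounted state visitation distribution `d^π_P`. -/
noncomputable def visitS (γ : ℝ) (P : S → A → S → ℝ) (π : S → A → ℝ) (ρ₀ : S → ℝ) : S → ℝ :=
  fun s => (1 - γ) * ∑' t : ℕ, γ ^ t * stateDist P π ρ₀ t s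

/-- Discounted state-action visitation distribution `μ^π_P`. -/
noncomputable def visitSA (γ : ℝ) (P : S → A → S → ℝ) (π : S → A → ℝ) (ρ₀ : S → ℝ) :
    S × A → ℝ :=
  fun x => (1 - γ) * ∑' t : ℕ, γ ^ t * stateDist P π ρ₀ t x.1 * π x.1 x.2

/-- Discounted transition (state-action-next-state) visitation distribution `ν^π_P`. -/
noncomputable def visitT (γ : ℝ) (P : S → A → S → ℝ) (π : S → A → ℝ) (ρ₀ : S → ℝ) :
    S × A × S → ℝ :=
  fun x => (1 - γ) * ∑' t : ℕ, γ ^ t * stateDist P π ρ₀ t x.1 * π x.1 x.2.1 * P x.1 x.2.1 x.2.2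

/-- Expected discounted return starting from initial distribution `ρ₀`. -/
noncomputable def ret (γ : ℝ) (r : S → A → S → ℝ) (P : S → A → S → ℝ) (π : S → A → ℝ)
    (ρ₀ : S → ℝ) : ℝ :=
  ∑' t : ℕ, γ ^ t *
    ∑ s : S, ∑ a : A, ∑ s' : S, stateDist P π ρ₀ t s * π s a * P s a s' * r s a s'

/-- Value function `V^π_P`. -/
noncomputable def valueFn (γ : ℝ) (r : S → A → S → ℝ) (P : S → A → S → ℝ) (π : S → A → ℝ) :
    S → ℝ :=
  fun s => ret γ r P π (fun s'' => if s'' = s then 1 else 0)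

/-- Expected discounted return `J^π_P = E_{ρ₀}[V^π_P]`. -/
noncomputable def expRet (γ : ℝ) (r : S → A → S → ℝ) (P : S → A → S → ℝ) (π : S → A → ℝ)
    (ρ₀ : S → ℝ) : ℝ :=
  ∑ s : S, ρ₀ s * valueFn γ r P π s

/-- Total variation distance `(1/2) ∑ |p - q|`. -/
noncomputable def tvDist {X : Type*} [Fintype X] (p q : X → ℝ) : ℝ :=
  (1 / 2) * ∑ x : X, |p x - q x|

/-- Kullback–Leibler divergence on a finite set. -/
noncomputable def klDiv' {X : Type*} [Fintype X] (p q : X → ℝ) : ℝ :=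
  ∑ x : X, p x * Real.log (p x / q x)

/-- Jensen–Shannon divergence on a finite set. -/
noncomputable def jsDiv {X : Type*} [Fintype X] (p q : X → ℝ) : ℝ :=
  (1 / 2) * klDiv' p (fun x => (p x + q x) / 2) +
    (1 / 2) * klDiv' q (fun x => (p x + q x) / 2)

/-- `π` is a stochastic policy. -/
def IsStochPol (π : S → A → ℝ) : Prop :=
  ∀ s, (∀ a, 0 ≤ π s a) ∧ ∑ a : A, π s a = 1

/-- `P` is a stochastic transition kernel. -/
def IsStochKer (P : S → A → S → ℝ) : Prop :=
  ∀ s a, (∀ s', 0 ≤ P s a s') ∧ ∑ s' : S, P s a s' = 1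

/-- `p` is a probability mass function. -/
def IsProb {X : Type*} [Fintype X] (p : X → ℝ) : Prop :=
  (∀ x, 0 ≤ p x) ∧ ∑ x : X, p x = 1

end MDP

/-!
Both returns are read off the discounted visitation distributions: `(1 - γ) J^π_P` is the
expected one-step reward `∑ d^π_P(s) π(a|s) P(s'|s,a) r(s,a,s')` (return is linear in the
initial distribution and sums commute with the discounted series). The difference of two such
sums splits as `d_s π (P_s - P_t) r + (d_s - d_t) π P_t r`, and each part is bounded by `R_max`
times an `ℓ¹` distance, i.e. twice a total variation distance.
-/

open Finset

section MDP

variable {S A : Type*} [Fintype S] [Fintype A] {γ : ℝ} {P : S → A → S → ℝ} {π : S → A → ℝ}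

theorem IsProb.le_one {X : Type*} [Fintype X] {p : X → ℝ} (hp : IsProb p) (x : X) :
    p x ≤ 1 :=
  hp.2 ▸ single_le_sum (fun i _ => hp.1 i) (mem_univ x)

theorem IsProb.stepDist (hπ : IsStochPol π) (hP : IsStochKer P) {ρ : S → ℝ} (hρ : IsProb ρ) :
    IsProb (stepDist P π ρ) := by
  refine ⟨fun s => sum_nonneg fun s' _ => sum_nonneg fun a _ =>
    mul_nonneg (mul_nonneg (hρ.1 s') ((hπ s').1 a)) ((hP s' a).1 s), ?_⟩
  calc ∑ s, ∑ s', ∑ a, ρ s' * π s' a * P s' a s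
      = ∑ s', ∑ a, ρ s' * π s' a * ∑ s, P s' a s := by
        rw [sum_comm]
        exact sum_congr rfl fun s' _ => by rw [sum_comm]; simp only [mul_sum]
    _ = 1 := by simp only [(hP _ _).2, mul_one, ← mul_sum, (hπ _).2, hρ.2]

theorem IsProb.stateDist (hπ : IsStochPol π) (hP : IsStochKer P) {ρ : S → ℝ} (hρ : IsProb ρ)
    (t : ℕ) : IsProb (stateDist P π ρ t) := by
  induction t with
  | zero => exact hρ
  | succ t ih => exact ih.stepDist hπ hP

theorem summable_geom_mul_stateDist (hγ0 : 0 ≤ γ) (hγ1 : γ < 1) (hπ : IsStochPol π)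
    (hP : IsStochKer P) {ρ : S → ℝ} (hρ : IsProb ρ) (s : S) :
    Summable fun t => γ ^ t * stateDist P π ρ t s :=
  Summable.of_nonneg_of_le
    (fun t => mul_nonneg (pow_nonneg hγ0 t) ((hρ.stateDist hπ hP t).1 s))
    (fun t => mul_le_of_le_one_right (pow_nonneg hγ0 t) ((hρ.stateDist hπ hP t).le_one s))
    (summable_geometric_of_lt_one hγ0 hγ1)

theorem visitS_nonneg (hγ0 : 0 ≤ γ) (hγ1 : γ < 1) (hπ : IsStochPol π) (hP : IsStochKer P)
    {ρ : S → ℝ} (hρ : IsProb ρ) (s : S) : 0 ≤ visitS γ P π ρ s :=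
  mul_nonneg (by linarith) (tsum_nonneg fun t =>
    mul_nonneg (pow_nonneg hγ0 t) ((hρ.stateDist hπ hP t).1 s))

variable (P π) in
noncomputable def stepDistₗ : (S → ℝ) →ₗ[ℝ] S → ℝ where
  toFun := stepDist P π
  map_add' ρ ρ' := by
    ext s
    simp only [stepDist, Pi.add_apply, add_mul, sum_add_distrib]
  map_smul' c ρ := by
    ext s
    simp only [stepDist, Pi.smul_apply, smul_eq_mul, RingHom.id_apply, mul_sum, mul_assoc]

theorem stateDist_eq_pow_apply (ρ : S → ℝ) (t : ℕ) :
    stateDist P π ρ t = (stepDistₗ P π ^ t) ρ := by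
  induction t with
  | zero => rfl
  | succ t ih => rw [pow_succ', Module.End.mul_apply, ← ih]; rfl

noncomputable def stepReward (r P : S → A → S → ℝ) (π : S → A → ℝ) (d : S → ℝ) : ℝ :=
  ∑ s, ∑ a, ∑ s', d s * π s a * P s a s' * r s a s'

variable (r : S → A → S → ℝ)

theorem stepReward_eq_sum_mul (d : S → ℝ) :
    stepReward r P π d = ∑ s, d s * ∑ a, ∑ s', π s a * P s a s' * r s a s' := by
  simp only [stepReward, mul_sum, mul_assoc]

theorem stepReward_sum_smul {ι : Type*} (I : Finset ι) (c : ι → ℝ) (d : ι → S → ℝ) :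
    stepReward r P π (∑ i ∈ I, c i • d i) = ∑ i ∈ I, c i * stepReward r P π (d i) := by
  simp only [stepReward_eq_sum_mul, Finset.sum_apply, Pi.smul_apply, smul_eq_mul, sum_mul,
    mul_assoc]
  exact sum_comm.trans (sum_congr rfl fun i _ => (mul_sum ..).symm)

theorem abs_stepReward_le {R : ℝ} (hπ : ∀ s a, 0 ≤ π s a) (hr : ∀ s a s', |r s a s'| ≤ R)
    (Q : S → A → S → ℝ) (d : S → ℝ) :
    |stepReward r Q π d| ≤ R * ∑ s, ∑ a, ∑ s', |d s| * π s a * |Q s a s'| := by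
  calc |stepReward r Q π d|
      ≤ ∑ s, ∑ a, ∑ s', |d s * π s a * Q s a s' * r s a s'| :=
        (abs_sum_le_sum_abs _ _).trans <| sum_le_sum fun s _ =>
          (abs_sum_le_sum_abs _ _).trans <| sum_le_sum fun a _ => abs_sum_le_sum_abs _ _
    _ ≤ ∑ s, ∑ a, ∑ s', R * (|d s| * π s a * |Q s a s'|) := by
        gcongr with s _ a _ s' _
        rw [abs_mul, abs_mul, abs_mul, abs_of_nonneg (hπ s a), mul_comm R]
        exact mul_le_mul_of_nonneg_left (hr s a s') (by have := hπ s a; positivity)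
    _ = R * ∑ s, ∑ a, ∑ s', |d s| * π s a * |Q s a s'| := by simp only [mul_sum]

theorem stepReward_sub_stepReward_le (hπ : IsStochPol π) {Ps Pt : S → A → S → ℝ}
    (hPt : IsStochKer Pt) {ds dt : S → ℝ} (hds : ∀ s, 0 ≤ ds s) {R : ℝ}
    (hr : ∀ s a s', |r s a s'| ≤ R) :
    stepReward r Ps π ds - stepReward r Pt π dt ≤
      2 * R * (tvDist ds dt + ∑ s, ∑ a, ds s * π s a * tvDist (Ps s a) (Pt s a)) := by
  have hsplit : stepReward r Ps π ds - stepReward r Pt π dt =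
      stepReward r (Ps - Pt) π ds + stepReward r Pt π (ds - dt) := by
    simp only [stepReward, ← sum_sub_distrib, ← sum_add_distrib]
    refine sum_congr rfl fun s _ => sum_congr rfl fun a _ => sum_congr rfl fun s' _ => ?_
    simp only [Pi.sub_apply]
    ring
  have hkernel : ∑ s, ∑ a, ∑ s', |ds s| * π s a * |(Ps - Pt) s a s'| =
      2 * ∑ s, ∑ a, ds s * π s a * tvDist (Ps s a) (Pt s a) := by
    simp only [mul_sum (s := univ) (a := (2 : ℝ))]
    refine sum_congr rfl fun s _ => sum_congr rfl fun a _ => ?_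
    rw [tvDist, ← mul_sum, abs_of_nonneg (hds s)]
    simp only [Pi.sub_apply]
    ring
  have hstate : ∑ s, ∑ a, ∑ s', |(ds - dt) s| * π s a * |Pt s a s'| = 2 * tvDist ds dt := by
    simp only [abs_of_nonneg ((hPt _ _).1 _), ← mul_sum, (hPt _ _).2, (hπ _).2, mul_one,
      tvDist, Pi.sub_apply]
    ring
  have hπ0 s a : 0 ≤ π s a := (hπ s).1 a
  calc stepReward r Ps π ds - stepReward r Pt π dt
      ≤ |stepReward r (Ps - Pt) π ds| + |stepReward r Pt π (ds - dt)| :=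
        hsplit ▸ add_le_add (le_abs_self _) (le_abs_self _)
    _ ≤ R * ∑ s, ∑ a, ∑ s', |ds s| * π s a * |(Ps - Pt) s a s'| +
        R * ∑ s, ∑ a, ∑ s', |(ds - dt) s| * π s a * |Pt s a s'| :=
        add_le_add (abs_stepReward_le r hπ0 hr _ _) (abs_stepReward_le r hπ0 hr _ _)
    _ = _ := by rw [hkernel, hstate]; ring

theorem one_sub_mul_ret (hγ0 : 0 ≤ γ) (hγ1 : γ < 1) (hπ : IsStochPol π) (hP : IsStochKer P)
    {ρ : S → ℝ} (hρ : IsProb ρ) :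
    (1 - γ) * ret γ r P π ρ = stepReward r P π (visitS γ P π ρ) := by
  have hsum := summable_geom_mul_stateDist hγ0 hγ1 hπ hP hρ
  calc (1 - γ) * ∑' t, γ ^ t * stepReward r P π (stateDist P π ρ t)
      = (1 - γ) * ∑' t, ∑ s, γ ^ t * stateDist P π ρ t s *
          ∑ a, ∑ s', π s a * P s a s' * r s a s' := by
        simp only [stepReward_eq_sum_mul, mul_sum, mul_assoc]
    _ = ∑ s, visitS γ P π ρ s * ∑ a, ∑ s', π s a * P s a s' * r s a s' := by
        rw [Summable.tsum_finsetSum fun s _ => (hsum s).mul_right _, mul_sum]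
        simp only [visitS, ← tsum_mul_right, mul_assoc]
    _ = stepReward r P π (visitS γ P π ρ) := (stepReward_eq_sum_mul r _).symm

variable [DecidableEq S]

theorem isProb_single (s : S) : IsProb (Pi.single s (1 : ℝ)) := by
  refine ⟨fun x => ?_, by simp⟩
  rw [Pi.single_apply]
  split_ifs <;> norm_num

theorem stateDist_eq_sum_single (ρ : S → ℝ) (t : ℕ) :
    stateDist P π ρ t = ∑ s₀, ρ s₀ • stateDist P π (Pi.single s₀ 1) t := by
  simp only [stateDist_eq_pow_apply, ← map_smul, ← map_sum, ← Pi.single_smul', smul_eq_mul,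
    mul_one, univ_sum_single]

theorem visitS_eq_sum_single (hγ0 : 0 ≤ γ) (hγ1 : γ < 1) (hπ : IsStochPol π)
    (hP : IsStochKer P) (ρ : S → ℝ) :
    visitS γ P π ρ = ∑ s₀, ρ s₀ • visitS γ P π (Pi.single s₀ 1) := by
  ext s
  have hsum s₀ := summable_geom_mul_stateDist hγ0 hγ1 hπ hP (isProb_single s₀) s
  rw [Finset.sum_apply]
  calc visitS γ P π ρ s
      = (1 - γ) * ∑' t, ∑ s₀, ρ s₀ * (γ ^ t * stateDist P π (Pi.single s₀ 1) t s) := by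
        simp only [visitS, stateDist_eq_sum_single ρ, Finset.sum_apply, Pi.smul_apply,
          smul_eq_mul, mul_sum, mul_left_comm]
    _ = ∑ s₀, (ρ s₀ • visitS γ P π (Pi.single s₀ 1)) s := by
        rw [Summable.tsum_finsetSum fun s₀ _ => (hsum s₀).mul_left _]
        simp only [visitS, Pi.smul_apply, smul_eq_mul, tsum_mul_left, mul_sum, mul_left_comm]

theorem one_sub_mul_expRet (hγ0 : 0 ≤ γ) (hγ1 : γ < 1) (hπ : IsStochPol π)
    (hP : IsStochKer P) (ρ : S → ℝ) :
    (1 - γ) * expRet γ r P π ρ = stepReward r P π (visitS γ P π ρ) := by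
  have hδ (s : S) : (fun s'' => if s'' = s then (1 : ℝ) else 0) = Pi.single s 1 :=
    funext fun s'' => (Pi.single_apply s 1 s'').symm
  calc (1 - γ) * expRet γ r P π ρ
      = ∑ s₀, ρ s₀ * ((1 - γ) * ret γ r P π (Pi.single s₀ 1)) := by
        simp only [expRet, valueFn, hδ, mul_sum, mul_left_comm]
    _ = ∑ s₀, ρ s₀ * stepReward r P π (visitS γ P π (Pi.single s₀ 1)) := by
        simp only [one_sub_mul_ret r hγ0 hγ1 hπ hP (isProb_single _)]
    _ = stepReward r P π (visitS γ P π ρ) := by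
        rw [visitS_eq_sum_single hγ0 hγ1 hπ hP ρ, stepReward_sum_smul]

end MDP

theorem stmt6 {S A : Type*} [Fintype S] [Fintype A] [DecidableEq S]
    (γ : ℝ) (hγ0 : 0 ≤ γ) (hγ1 : γ < 1)
    (r Ps Pt : S → A → S → ℝ) (π : S → A → ℝ) (ρ₀ : S → ℝ)
    (hπ : IsStochPol π) (hPs : IsStochKer Ps) (hPt : IsStochKer Pt) (hρ : IsProb ρ₀)
    (Rmax : ℝ) (hr : ∀ s a s', |r s a s'| ≤ Rmax) :
    expRet γ r Pt π ρ₀ ≥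
      expRet γ r Ps π ρ₀ -
        (2 * Rmax / (1 - γ)) *
          (tvDist (visitS γ Ps π ρ₀) (visitS γ Pt π ρ₀) +
            ∑ s : S, ∑ a : A, visitS γ Ps π ρ₀ s * π s a *
              tvDist (fun s' => Ps s a s') (fun s' => Pt s a s')) := by
  have hgap := stepReward_sub_stepReward_le r hπ hPt (Ps := Ps) (dt := visitS γ Pt π ρ₀)
    (visitS_nonneg hγ0 hγ1 hπ hPs hρ) hr
  rw [ge_iff_le, sub_le_comm, div_mul_eq_mul_div, le_div_iff₀ (by linarith)]
  calc (expRet γ r Ps π ρ₀ - expRet γ r Pt π ρ₀) * (1 - γ)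
      = stepReward r Ps π (visitS γ Ps π ρ₀) - stepReward r Pt π (visitS γ Pt π ρ₀) := by
        rw [← one_sub_mul_expRet r hγ0 hγ1 hπ hPs, ← one_sub_mul_expRet r hγ0 hγ1 hπ hPt]
        ring
    _ ≤ _ := hgap
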